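/- arXiv:0901.3697 — 3 statements merged into one kernel-verified Lean document; each statement's English description precedes it below -/
import Mathlib

section
/- Let X be a random variable with a logconcave density f : ℝ → ℝ≥0. Then P(X ≥ E[X]) ≥ 1/e. -/
/-!
Write `G t = ∫_{[t, ∞)} f`, `p = G m` and `a = f m / p` at the mean `m`. By logconcavity the hazard
rate `f / G` is nondecreasing, so `f ≥ a G` on `[m, ∞)` and `f ≤ a G` on `(-∞, m]`. Integrating the
first bound gives `a E(X - m)⁺ = a ∫_m^∞ G ≤ p`. Grönwall applied to the second gives
`G t ≤ p e^{a (m - t)}` for `t ≤ m`, hence `a E(m - X)⁺ = a ∫_{-∞}^m (1 - G) ≥ -log p - (1 - p)`.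
As `E(X - m)⁺ = E(m - X)⁺`, the two bounds combine to `-log p ≤ 1`.
-/

open MeasureTheory Set

theorem integral_Ici_eq_integral_Ici_zero_comp_add (f : ℝ → ℝ) (t : ℝ) :
    ∫ x in Ici t, f x = ∫ u in Ici 0, f (u + t) := by
  rw [← (measurePreserving_add_right volume t).setIntegral_preimage_emb
    (measurableEmbedding_addRight t), preimage_add_const_Ici, sub_self]

theorem continuous_integral_Ici {f : ℝ → ℝ} (hfi : Integrable f) :
    Continuous fun t => ∫ x in Ici t, f x := by
  have h : (fun t => ∫ x in Ici t, f x) = fun t => (∫ x in Ici 0, f x) - ∫ x in 0..t, f x := by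
    ext t
    rw [← intervalIntegral.integral_Ici_sub_Ici' hfi.integrableOn hfi.integrableOn]
    ring
  rw [h]
  exact continuous_const.sub
    (intervalIntegral.continuous_primitive (fun _ _ => hfi.intervalIntegrable) 0)

def LogConcave (f : ℝ → ℝ) : Prop :=
  ∀ x y l : ℝ, 0 ≤ l → l ≤ 1 → f x ^ l * f y ^ (1 - l) ≤ f (l * x + (1 - l) * y)

namespace LogConcave

variable {f : ℝ → ℝ}

theorem rpow_mul_rpow_le (hf : LogConcave f) {α β : ℝ} (hα : 0 ≤ α) (hβ : 0 ≤ β)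
    (hαβ : α + β = 1) (x y : ℝ) : f x ^ α * f y ^ β ≤ f (α * x + β * y) := by
  obtain rfl : β = 1 - α := by linarith
  exact hf x y α hα (by linarith)

theorem pos_of_mem_Icc (hf : LogConcave f) {x y z : ℝ} (hx : 0 < f x) (hy : 0 < f y)
    (hz : z ∈ Icc x y) : 0 < f z := by
  rw [← segment_eq_Icc (hz.1.trans hz.2)] at hz
  obtain ⟨α, β, hα, hβ, hαβ, rfl⟩ := hz
  exact (mul_pos (Real.rpow_pos_of_pos hx α) (Real.rpow_pos_of_pos hy β)).trans_le
    (hf.rpow_mul_rpow_le hα hβ hαβ x y)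

theorem mul_le_mul_of_add_eq (hf : LogConcave f) (hf0 : ∀ x, 0 ≤ f x) {a b c d : ℝ}
    (hac : a ≤ c) (hcb : c ≤ b) (hd : a + b = c + d) : f a * f b ≤ f c * f d := by
  have hc : c ∈ segment ℝ a b := segment_eq_Icc (hac.trans hcb) ▸ ⟨hac, hcb⟩
  obtain ⟨α, β, hα, hβ, hαβ, rfl⟩ := hc
  obtain rfl : d = β * a + α * b := by
    simp only [smul_eq_mul] at hd
    linear_combination -hd - (a + b) * hαβ
  have hβα : β + α = 1 := by linarith
  calc f a * f b = (f a ^ α * f b ^ β) * (f a ^ β * f b ^ α) := by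
        rw [mul_mul_mul_comm, ← Real.rpow_add' (hf0 a) (by rw [hαβ]; exact one_ne_zero),
          ← Real.rpow_add' (hf0 b) (by rw [hβα]; exact one_ne_zero), hαβ, hβα, Real.rpow_one,
          Real.rpow_one]
    _ ≤ f (α * a + β * b) * f (β * a + α * b) :=
        mul_le_mul (hf.rpow_mul_rpow_le hα hβ hαβ a b) (hf.rpow_mul_rpow_le hβ hα hβα a b)
          (mul_nonneg (Real.rpow_nonneg (hf0 a) _) (Real.rpow_nonneg (hf0 b) _)) (hf0 _)

theorem mul_integral_Ici_le (hf : LogConcave f) (hf0 : ∀ x, 0 ≤ f x)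
    (hfi : Integrable f) {s t : ℝ} (hst : s ≤ t) :
    f s * ∫ x in Ici t, f x ≤ f t * ∫ x in Ici s, f x := by
  rw [integral_Ici_eq_integral_Ici_zero_comp_add f t,
    integral_Ici_eq_integral_Ici_zero_comp_add f s, ← integral_const_mul, ← integral_const_mul]
  refine setIntegral_mono_on ((hfi.comp_add_right t).const_mul _).integrableOn
    ((hfi.comp_add_right s).const_mul _).integrableOn measurableSet_Ici fun u hu => ?_
  exact hf.mul_le_mul_of_add_eq hf0 hst (le_add_of_nonneg_left hu) (by ring)

theorem integral_Ici_pos (hf : LogConcave f) (hf0 : ∀ x, 0 ≤ f x)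
    (hfi : Integrable f) {m x : ℝ} (hm : 0 < f m) (hx : m < x) (hfx : 0 < f x) :
    0 < ∫ t in Ici m, f t := by
  rw [setIntegral_pos_iff_support_of_nonneg_ae (ae_of_all _ hf0) hfi.integrableOn]
  calc 0 < volume (Icc m x) := by simp [hx]
    _ ≤ volume (Function.support f ∩ Ici m) :=
        measure_mono fun t ht => ⟨(hf.pos_of_mem_Icc hm hfx ht).ne', ht.1⟩

end LogConcave

theorem le_mul_exp_of_le_add_mul_integral {φ : ℝ → ℝ} (hφ : Continuous φ) {p a : ℝ} (ha : 0 ≤ a)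
    (h : ∀ s, 0 ≤ s → φ s ≤ p + a * ∫ u in (0 : ℝ)..s, φ u) {s : ℝ} (hs : 0 ≤ s) :
    φ s ≤ p * Real.exp (a * s) := by
  rcases ha.eq_or_lt with rfl | ha
  · simpa using h s hs
  set Φ : ℝ → ℝ := fun r => ∫ u in (0 : ℝ)..r, φ u
  have hΦ : ∀ x, HasDerivAt Φ (φ x) x := fun x =>
    (hφ.integral_hasStrictDerivAt 0 x).hasDerivAt
  have hΦs : Φ s ≤ gronwallBound 0 a p (s - 0) :=
    le_gronwallBound_of_liminf_deriv_right_le (continuous_iff_continuousAt.2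
      fun x => (hΦ x).continuousAt).continuousOn
      (fun x _ r hr => (hΦ x).hasDerivWithinAt.liminf_right_slope_le hr)
      (by simp [Φ]) (fun x hx => by linarith [h x hx.1]) s ⟨hs, le_rfl⟩
  rw [sub_zero, gronwallBound_of_K_ne_0 ha.ne'] at hΦs
  calc φ s ≤ p + a * Φ s := h s hs
    _ ≤ p + a * (0 * Real.exp (a * s) + p / a * (Real.exp (a * s) - 1)) := by gcongr
    _ = p * Real.exp (a * s) := by field_simp; ring

theorem integral_Ici_le_mul_exp {f : ℝ → ℝ} (hfi : Integrable f) {m a : ℝ} (ha : 0 ≤ a)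
    (h : ∀ t ≤ m, f t ≤ a * ∫ x in Ici t, f x) {t : ℝ} (ht : t ≤ m) :
    ∫ x in Ici t, f x ≤ (∫ x in Ici m, f x) * Real.exp (a * (m - t)) := by
  set G : ℝ → ℝ := fun t => ∫ x in Ici t, f x
  have hG : Continuous G := continuous_integral_Ici hfi
  have key : ∀ s, 0 ≤ s → G (m - s) ≤ G m + a * ∫ u in (0 : ℝ)..s, G (m - u) := by
    intro s hs
    have hsplit : G (m - s) = G m + ∫ x in m - s..m, f x := by
      rw [← intervalIntegral.integral_Ici_sub_Ici' hfi.integrableOn hfi.integrableOn]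
      ring
    rw [hsplit, intervalIntegral.integral_comp_sub_left G m, sub_zero,
      ← intervalIntegral.integral_const_mul]
    gcongr
    exact intervalIntegral.integral_mono_on (by linarith) hfi.intervalIntegrable
      ((hG.intervalIntegrable _ _).const_mul a) fun x hx => h x hx.2
  simpa using le_mul_exp_of_le_add_mul_integral (hG.comp (continuous_sub_left m)) ha key
    (sub_nonneg.2 ht)

theorem lintegral_lintegral_indicator_snd {S : Set (ℝ × ℝ)} (hS : MeasurableSet S)
    {g : ℝ → ENNReal} (hg : AEMeasurable g) :
    ∫⁻ t, ∫⁻ x, S.indicator (fun z => g z.2) (t, x) = ∫⁻ x, volume {t | (t, x) ∈ S} * g x := by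
  rw [lintegral_lintegral_swap (f := fun t x => S.indicator (fun z => g z.2) (t, x))
    (hg.comp_snd.indicator hS)]
  congr with x
  rw [mul_comm]
  exact lintegral_indicator_const (measurable_prodMk_right hS) (g x)

theorem lintegral_Ioi_lintegral_Ici {g : ℝ → ENNReal} (hg : AEMeasurable g) (m : ℝ) :
    ∫⁻ t in Ioi m, ∫⁻ x in Ici t, g x = ∫⁻ x in Ici m, ENNReal.ofReal (x - m) * g x := by
  have hS : MeasurableSet {z : ℝ × ℝ | m < z.1 ∧ z.1 ≤ z.2} :=
    (measurableSet_lt measurable_const measurable_fst).inter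
      (measurableSet_le measurable_fst measurable_snd)
  calc ∫⁻ t in Ioi m, ∫⁻ x in Ici t, g x
      = ∫⁻ t, ∫⁻ x, {z : ℝ × ℝ | m < z.1 ∧ z.1 ≤ z.2}.indicator (fun z => g z.2) (t, x) := by
        rw [← lintegral_indicator measurableSet_Ioi]
        congr with t
        by_cases ht : m < t
        · simp [ht, ← lintegral_indicator measurableSet_Ici, indicator]
        · simp [ht, indicator]
    _ = ∫⁻ x, ENNReal.ofReal (x - m) * g x := by
        rw [lintegral_lintegral_indicator_snd hS hg]
        congr with x
        rw [← Real.volume_Ioc]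
        rfl
    _ = _ := by
        refine (setLIntegral_eq_of_support_subset fun x hx => ?_).symm
        simp only [Function.mem_support, ne_eq, mul_eq_zero, ENNReal.ofReal_eq_zero, not_or,
          not_le, sub_pos] at hx
        exact mem_Ici.2 hx.1.le

theorem lintegral_Iio_lintegral_Iio {g : ℝ → ENNReal} (hg : AEMeasurable g) (m : ℝ) :
    ∫⁻ t in Iio m, ∫⁻ x in Iio t, g x = ∫⁻ x in Iio m, ENNReal.ofReal (m - x) * g x := by
  have hS : MeasurableSet {z : ℝ × ℝ | z.2 < z.1 ∧ z.1 < m} :=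
    (measurableSet_lt measurable_snd measurable_fst).inter
      (measurableSet_lt measurable_fst measurable_const)
  calc ∫⁻ t in Iio m, ∫⁻ x in Iio t, g x
      = ∫⁻ t, ∫⁻ x, {z : ℝ × ℝ | z.2 < z.1 ∧ z.1 < m}.indicator (fun z => g z.2) (t, x) := by
        rw [← lintegral_indicator measurableSet_Iio]
        congr with t
        by_cases ht : t < m
        · simp [ht, ← lintegral_indicator measurableSet_Iio, indicator]
        · simp [ht, indicator]
    _ = ∫⁻ x, ENNReal.ofReal (m - x) * g x := by
        rw [lintegral_lintegral_indicator_snd hS hg]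
        congr with x
        rw [← Real.volume_Ioo]
        rfl
    _ = _ := by
        refine (setLIntegral_eq_of_support_subset fun x hx => ?_).symm
        simp only [Function.mem_support, ne_eq, mul_eq_zero, ENNReal.ofReal_eq_zero, not_or,
          not_le, sub_pos] at hx
        exact hx.1

theorem ofReal_integral_Ici_sub_mul {f : ℝ → ℝ} (hf0 : ∀ x, 0 ≤ f x) (hfi : Integrable f) {m : ℝ}
    (hint : IntegrableOn (fun x => (x - m) * f x) (Ici m)) :
    ENNReal.ofReal (∫ x in Ici m, (x - m) * f x) =
      ∫⁻ t in Ioi m, ENNReal.ofReal (∫ x in Ici t, f x) := by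
  rw [ofReal_integral_eq_lintegral_ofReal hint ((ae_restrict_iff' measurableSet_Ici).2
    (ae_of_all _ fun x hx => mul_nonneg (sub_nonneg.2 hx) (hf0 x)))]
  simp_rw [ENNReal.ofReal_mul' (hf0 _),
    ← lintegral_Ioi_lintegral_Ici hfi.aemeasurable.ennreal_ofReal,
    ofReal_integral_eq_lintegral_ofReal hfi.integrableOn (ae_of_all _ fun x => hf0 x)]

theorem ofReal_integral_Iio_sub_mul {f : ℝ → ℝ} (hf0 : ∀ x, 0 ≤ f x) (hfi : Integrable f) {m : ℝ}
    (hint : IntegrableOn (fun x => (m - x) * f x) (Iio m)) :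
    ENNReal.ofReal (∫ x in Iio m, (m - x) * f x) =
      ∫⁻ t in Iio m, ENNReal.ofReal (∫ x in Iio t, f x) := by
  rw [ofReal_integral_eq_lintegral_ofReal hint ((ae_restrict_iff' measurableSet_Iio).2
    (ae_of_all _ fun x hx => mul_nonneg (sub_nonneg.2 (le_of_lt hx)) (hf0 x)))]
  simp_rw [ENNReal.ofReal_mul' (hf0 _),
    ← lintegral_Iio_lintegral_Iio hfi.aemeasurable.ennreal_ofReal,
    ofReal_integral_eq_lintegral_ofReal hfi.integrableOn (ae_of_all _ fun x => hf0 x)]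

theorem mul_integral_Ici_sub_mul_le {f : ℝ → ℝ} (hf0 : ∀ x, 0 ≤ f x) (hfi : Integrable f)
    {m a : ℝ} (ha : 0 ≤ a) (hint : IntegrableOn (fun x => (x - m) * f x) (Ici m))
    (h : ∀ t ≥ m, a * ∫ x in Ici t, f x ≤ f t) :
    a * ∫ x in Ici m, (x - m) * f x ≤ ∫ x in Ici m, f x := by
  rw [← ENNReal.ofReal_le_ofReal_iff (setIntegral_nonneg measurableSet_Ici fun x _ => hf0 x),
    ENNReal.ofReal_mul ha, ofReal_integral_Ici_sub_mul hf0 hfi hint,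
    ← lintegral_const_mul' _ _ ENNReal.ofReal_ne_top,
    ofReal_integral_eq_lintegral_ofReal hfi.integrableOn (ae_of_all _ fun x => hf0 x),
    ← setLIntegral_congr Ioi_ae_eq_Ici]
  refine lintegral_mono_ae ((ae_restrict_iff' measurableSet_Ioi).2 (ae_of_all _ fun t ht => ?_))
  rw [← ENNReal.ofReal_mul ha]
  exact ENNReal.ofReal_le_ofReal (h t (le_of_lt ht))

theorem integral_one_sub_mul_exp {p a m L : ℝ} (ha : 0 < a) (hL : a * L = -Real.log p)
    (hp : 0 < p) :
    ∫ t in (m - L)..m, (1 - p * Real.exp (a * (m - t))) = L - (1 - p) / a := by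
  have hderiv : ∀ t, HasDerivAt (fun t => t + p / a * Real.exp (a * (m - t)))
      (1 - p * Real.exp (a * (m - t))) t := fun t => by
    refine ((hasDerivAt_id' t).add ((((hasDerivAt_id' t).const_sub m).const_mul a).exp.const_mul
      (p / a))).congr_deriv ?_
    field_simp
    ring
  rw [intervalIntegral.integral_eq_sub_of_hasDerivAt (fun t _ => hderiv t)
    ((by fun_prop : Continuous _).intervalIntegrable _ _)]
  rw [sub_self, mul_zero, Real.exp_zero, sub_sub_cancel, hL, Real.exp_neg, Real.exp_log hp]
  field_simp
  ring

theorem neg_log_sub_le_mul_integral_Iio {f : ℝ → ℝ} (hf0 : ∀ x, 0 ≤ f x) (hfi : Integrable f)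
    (hf1 : ∫ x, f x = 1) {m a : ℝ} (ha : 0 < a)
    (hint : IntegrableOn (fun x => (m - x) * f x) (Iio m)) (hp : 0 < ∫ x in Ici m, f x)
    (h : ∀ t ≤ m, f t ≤ a * ∫ x in Ici t, f x) :
    -Real.log (∫ x in Ici m, f x) - (1 - ∫ x in Ici m, f x) ≤
      a * ∫ x in Iio m, (m - x) * f x := by
  set p := ∫ x in Ici m, f x
  have hp1 : p ≤ 1 := hf1 ▸ setIntegral_le_integral hfi (ae_of_all _ hf0)
  set L := -Real.log p / a
  have hL : a * L = -Real.log p := mul_div_cancel₀ _ ha.ne'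
  have hL0 : 0 ≤ L := div_nonneg (neg_nonneg.2 (Real.log_nonpos hp.le hp1)) ha.le
  have hlower : ∀ t ∈ Ioo (m - L) m,
      1 - p * Real.exp (a * (m - t)) ≤ ∫ x in Iio t, f x := fun t ht => by
    have hsplit := integral_add_compl (measurableSet_Ici (a := t)) hfi
    rw [compl_Ici, hf1] at hsplit
    linarith [integral_Ici_le_mul_exp hfi ha.le h ht.2.le]
  have hnonneg : ∀ t ∈ Ioo (m - L) m, 0 ≤ 1 - p * Real.exp (a * (m - t)) := fun t ht => by
    have : Real.exp (a * (m - t)) ≤ Real.exp (a * L) := by gcongr; linarith [ht.1]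
    rw [hL, Real.exp_neg, Real.exp_log hp] at this
    linarith [mul_le_mul_of_nonneg_left this hp.le, mul_inv_cancel₀ hp.ne']
  have hB : L - (1 - p) / a ≤ ∫ x in Iio m, (m - x) * f x := by
    rw [← ENNReal.ofReal_le_ofReal_iff (setIntegral_nonneg measurableSet_Iio
      fun x hx => mul_nonneg (sub_nonneg.2 (le_of_lt hx)) (hf0 x)),
      ofReal_integral_Iio_sub_mul hf0 hfi hint, ← integral_one_sub_mul_exp (m := m) ha hL hp,
      intervalIntegral.integral_of_le (by linarith), integral_Ioc_eq_integral_Ioo,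
      ofReal_integral_eq_lintegral_ofReal
        (((by fun_prop : Continuous _).integrableOn_Icc).mono_set Ioo_subset_Icc_self)
        ((ae_restrict_iff' measurableSet_Ioo).2 (ae_of_all _ hnonneg))]
    calc ∫⁻ t in Ioo (m - L) m, ENNReal.ofReal (1 - p * Real.exp (a * (m - t)))
        ≤ ∫⁻ t in Ioo (m - L) m, ENNReal.ofReal (∫ x in Iio t, f x) :=
          lintegral_mono_ae ((ae_restrict_iff' measurableSet_Ioo).2
            (ae_of_all _ fun t ht => ENNReal.ofReal_le_ofReal (hlower t ht)))
      _ ≤ ∫⁻ t in Iio m, ENNReal.ofReal (∫ x in Iio t, f x) :=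
          lintegral_mono_set Ioo_subset_Iio_self
  calc -Real.log p - (1 - p) = a * (L - (1 - p) / a) := by
        rw [mul_sub, hL, mul_div_cancel₀ _ ha.ne']
    _ ≤ a * ∫ x in Iio m, (m - x) * f x := by gcongr

theorem exists_pos_lt_and_exists_pos_gt {f : ℝ → ℝ} {m : ℝ} (hf0 : ∀ x, 0 ≤ f x)
    (hf : ∫ x, f x ≠ 0) (hint : Integrable fun x => (x - m) * f x)
    (h : ∫ x, (x - m) * f x = 0) : (∃ x < m, 0 < f x) ∧ ∃ x > m, 0 < f x := by
  have hne : ¬ (fun x => (x - m) * f x) =ᵐ[volume] 0 := fun h0 =>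
    hf <| integral_eq_zero_of_ae <| by
    filter_upwards [h0, volume.ae_ne m] with x hx hxm
    exact (mul_eq_zero.1 hx).resolve_left (sub_ne_zero.2 hxm)
  constructor
  · by_contra! hle
    refine hne ((integral_eq_zero_iff_of_nonneg (fun x => ?_) hint).1 h)
    rcases lt_or_ge x m with hx | hx
    · simp [le_antisymm (hle x hx) (hf0 x)]
    · exact mul_nonneg (sub_nonneg.2 hx) (hf0 x)
  · by_contra! hle
    have hneg := (integral_eq_zero_iff_of_nonneg (f := fun x => -((x - m) * f x))
      (fun x => ?_) hint.neg).1 (by rw [integral_neg, h, neg_zero])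
    · exact hne (hneg.mono fun x hx => neg_eq_zero.1 hx)
    rcases le_or_gt x m with hx | hx
    · exact neg_nonneg.2 (mul_nonpos_of_nonpos_of_nonneg (sub_nonpos.2 hx) (hf0 x))
    · simp [le_antisymm (hle x hx) (hf0 x)]

theorem integral_Ici_sub_mul_eq_integral_Iio_sub_mul {f : ℝ → ℝ} {m : ℝ}
    (hint : Integrable fun x => (x - m) * f x) (h : ∫ x, (x - m) * f x = 0) :
    ∫ x in Ici m, (x - m) * f x = ∫ x in Iio m, (m - x) * f x := by
  have hsplit := integral_add_compl (measurableSet_Ici (a := m)) hint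
  rw [compl_Ici, h] at hsplit
  simp_rw [← neg_sub _ m, neg_mul, integral_neg]
  linarith

/-- if `X` has a logconcave density `f` on `ℝ` with finite mean `μ = E[X]`,
then `P(X ≥ E[X]) ≥ 1/e`. -/
theorem stmt2 (f : ℝ → ℝ)
    (hf_nonneg : ∀ x, 0 ≤ f x)
    (hf_density : ∫ x, f x = 1)
    (hf_int : Integrable f)
    (hf_logconcave : ∀ x y l : ℝ, 0 ≤ l → l ≤ 1 →
      f x ^ l * f y ^ (1 - l) ≤ f (l * x + (1 - l) * y))
    (hmean_int : Integrable (fun x => x * f x)) :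
    1 / Real.exp 1 ≤ ∫ x in Ici (∫ x, x * f x), f x := by
  have hlc : LogConcave f := hf_logconcave
  set m := ∫ x, x * f x
  have hcint : Integrable fun x => (x - m) * f x := by
    simp_rw [sub_mul]
    exact hmean_int.sub (hf_int.const_mul m)
  have hcint' : IntegrableOn (fun x => (m - x) * f x) (Iio m) := by
    simp_rw [sub_mul]
    exact ((hf_int.const_mul m).sub hmean_int).integrableOn
  have hcenter : ∫ x, (x - m) * f x = 0 := by
    simp_rw [sub_mul]
    rw [integral_sub hmean_int (hf_int.const_mul m), integral_const_mul, hf_density, mul_one,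
      sub_self]
  obtain ⟨⟨x₁, hx₁, hfx₁⟩, x₂, hx₂, hfx₂⟩ :=
    exists_pos_lt_and_exists_pos_gt hf_nonneg (by simp [hf_density]) hcint hcenter
  have hq : 0 < f m := hlc.pos_of_mem_Icc hfx₁ hfx₂ ⟨hx₁.le, hx₂.le⟩
  have hp : 0 < ∫ x in Ici m, f x := hlc.integral_Ici_pos hf_nonneg hf_int hq hx₂ hfx₂
  set p := ∫ x in Ici m, f x
  have hright : f m / p * ∫ x in Ici m, (x - m) * f x ≤ p :=
    mul_integral_Ici_sub_mul_le hf_nonneg hf_int (by positivity) hcint.integrableOn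
      fun t ht => by
        rw [div_mul_eq_mul_div, div_le_iff₀ hp]
        exact hlc.mul_integral_Ici_le hf_nonneg hf_int ht
  have hleft : -Real.log p - (1 - p) ≤ f m / p * ∫ x in Iio m, (m - x) * f x :=
    neg_log_sub_le_mul_integral_Iio hf_nonneg hf_int hf_density (by positivity) hcint' hp
      fun t ht => by
        rw [div_mul_eq_mul_div, le_div_iff₀ hp]
        exact hlc.mul_integral_Ici_le hf_nonneg hf_int ht
  have hlog : -1 ≤ Real.log p := by
    rw [← integral_Ici_sub_mul_eq_integral_Iio_sub_mul hcint hcenter] at hleft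
    linarith
  calc 1 / Real.exp 1 = Real.exp (-1) := by rw [Real.exp_neg, one_div]
    _ ≤ Real.exp (Real.log p) := Real.exp_le_exp.2 hlog
    _ = p := Real.exp_log hp
end

section
/- Let f : ℝ^s → ℝ_+ be an isotropic logconcave density (mean 0, identity covariance). Then the maximum value of f satisfies M_f ≥ (4eπ)^{-s/2}. -/
/-!
Comparing `f` with a standard Gaussian: Jensen's inequality, in the tangent-line form
`exp t ≥ 1 + t`, gives `∫ f(x) exp(-|x|²/2) dx ≥ exp(-∫ f(x) |x|²/2 dx) = exp(-s/2)`, while the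
same integral is at most `M_f (2π)^(s/2)`. Hence `M_f ≥ (2πe)^(-s/2) ≥ (4eπ)^(-s/2)`.
-/

open MeasureTheory Real

theorem exp_neg_integral_mul_le_integral_exp_neg_mul {α : Type*} [MeasurableSpace α]
    {μ : Measure α} {f q : α → ℝ} (hf : ∀ x, 0 ≤ f x)
    (hfi : Integrable f μ) (hf1 : ∫ x, f x ∂μ = 1) (hqf : Integrable (fun x ↦ q x * f x) μ)
    (hef : Integrable (fun x ↦ exp (-q x) * f x) μ) :
    exp (-∫ x, q x * f x ∂μ) ≤ ∫ x, exp (-q x) * f x ∂μ := by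
  set m := ∫ x, q x * f x ∂μ
  have tangent : ∀ x, exp (-m) * ((1 + m) * f x - q x * f x) ≤ exp (-q x) * f x := fun x ↦ by
    calc exp (-m) * ((1 + m) * f x - q x * f x) = exp (-m) * (m - q x + 1) * f x := by ring
      _ ≤ exp (-m) * exp (m - q x) * f x :=
        mul_le_mul_of_nonneg_right
          (mul_le_mul_of_nonneg_left (add_one_le_exp _) (exp_pos _).le) (hf x)
      _ = exp (-q x) * f x := by rw [← exp_add]; ring_nf
  calc exp (-m) = ∫ x, exp (-m) * ((1 + m) * f x - q x * f x) ∂μ := by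
        rw [integral_const_mul, integral_sub (hfi.const_mul _) hqf, integral_const_mul, hf1]
        ring
    _ ≤ ∫ x, exp (-q x) * f x ∂μ :=
        integral_mono (((hfi.const_mul _).sub hqf).const_mul _) hef tangent

section Gaussian

variable {ι : Type*} [Fintype ι]

theorem exp_neg_sum_sq_div_two_eq_prod (x : ι → ℝ) :
    exp (-∑ i, x i ^ 2 / 2) = ∏ i, exp (-(1 / 2) * x i ^ 2) := by
  rw [← Finset.sum_neg_distrib, exp_sum]
  congr! 2 with i
  ring

theorem integrable_exp_neg_sum_sq_div_two :
    Integrable fun x : ι → ℝ ↦ exp (-∑ i, x i ^ 2 / 2) := by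
  simp_rw [exp_neg_sum_sq_div_two_eq_prod]
  exact Integrable.fintype_prod fun _ ↦ integrable_exp_neg_mul_sq (by norm_num)

theorem integral_exp_neg_sum_sq_div_two :
    ∫ x : ι → ℝ, exp (-∑ i, x i ^ 2 / 2) = (2 * π) ^ (Fintype.card ι / 2 : ℝ) := by
  simp_rw [exp_neg_sum_sq_div_two_eq_prod]
  rw [integral_fintype_prod_volume_eq_pow (fun t ↦ exp (-(1 / 2) * t ^ 2)), integral_gaussian,
    sqrt_eq_rpow, ← rpow_natCast, ← rpow_mul (by positivity)]
  congr 1 <;> ring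

end Gaussian

theorem two_pi_exp_rpow_neg_le_of_le_of_integral_sq {ι : Type*} [Fintype ι]
    {f : (ι → ℝ) → ℝ} {M : ℝ} (hf_nonneg : ∀ x, 0 ≤ f x) (hf_le : ∀ x, f x ≤ M)
    (hf1 : ∫ x, f x = 1) (hvar : ∀ i, ∫ x, x i ^ 2 * f x = 1) :
    (2 * π * exp 1) ^ (-(Fintype.card ι : ℝ) / 2) ≤ M := by
  set n : ℝ := (Fintype.card ι : ℝ)
  set q : (ι → ℝ) → ℝ := fun x ↦ ∑ i, x i ^ 2 / 2
  have hfi : Integrable f := .of_integral_ne_zero (by simp [hf1])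
  have hsq (i : ι) : Integrable fun x ↦ x i ^ 2 / 2 * f x := by
    simp_rw [div_mul_eq_mul_div]
    exact (Integrable.of_integral_ne_zero (by simp [hvar i])).div_const 2
  have hqf : Integrable fun x ↦ q x * f x := by
    simp_rw [q, Finset.sum_mul]
    exact integrable_finsetSum _ fun i _ ↦ hsq i
  have hq_mean : ∫ x, q x * f x = n / 2 := by
    simp_rw [q, Finset.sum_mul]
    rw [integral_finsetSum _ fun i _ ↦ hsq i]
    simp_rw [div_mul_eq_mul_div, integral_div, hvar]
    simp [n, div_eq_mul_inv]
  have hG := integrable_exp_neg_sum_sq_div_two (ι := ι)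
  have hef : Integrable fun x ↦ exp (-q x) * f x :=
    (hG.const_mul M).mono' (hG.aestronglyMeasurable.mul hfi.aestronglyMeasurable)
      (ae_of_all _ fun x ↦ by
        rw [norm_mul, norm_of_nonneg (exp_pos _).le, norm_of_nonneg (hf_nonneg x), mul_comm]
        exact mul_le_mul_of_nonneg_right (hf_le x) (exp_pos _).le)
  have key : exp (-(n / 2)) ≤ M * (2 * π) ^ (n / 2) := by
    calc exp (-(n / 2)) ≤ ∫ x, exp (-q x) * f x := by
          simpa only [hq_mean] using
            exp_neg_integral_mul_le_integral_exp_neg_mul hf_nonneg hfi hf1 hqf hef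
      _ ≤ ∫ x, M * exp (-q x) :=
          integral_mono hef (hG.const_mul M) fun x ↦ by
            rw [mul_comm]; exact mul_le_mul_of_nonneg_right (hf_le x) (exp_pos _).le
      _ = M * (2 * π) ^ (n / 2) := by rw [integral_const_mul, integral_exp_neg_sum_sq_div_two]
  have h2pi : 0 < (2 * π) ^ (n / 2) := by positivity
  rw [mul_rpow (by positivity) (exp_pos 1).le, exp_one_rpow, neg_div, rpow_neg (by positivity),
    inv_mul_le_iff₀ h2pi, mul_comm]
  exact key

theorem stmt7_general (s : ℕ) (f : (Fin s → ℝ) → ℝ) (M : ℝ)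
    (hf_nonneg : ∀ x, 0 ≤ f x)
    (hf_density : ∫ x, f x = 1)
    (hcov : ∀ i j, ∫ x, x i * x j * f x = if i = j then 1 else 0)
    (hM : IsLUB (Set.range f) M) :
    (4 * Real.exp 1 * Real.pi) ^ (-(s : ℝ) / 2) ≤ M := by
  have hvar (i : Fin s) : ∫ x, x i ^ 2 * f x = 1 := by simpa [sq] using hcov i i
  have hbound := two_pi_exp_rpow_neg_le_of_le_of_integral_sq hf_nonneg
    (fun x ↦ hM.1 ⟨x, rfl⟩) hf_density hvar
  rw [Fintype.card_fin] at hbound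
  refine le_trans (rpow_le_rpow_of_nonpos (by positivity) ?_ ?_) hbound
  · nlinarith [pi_pos, exp_pos 1]
  · exact div_nonpos_of_nonpos_of_nonneg (neg_nonpos.2 s.cast_nonneg) zero_le_two

/-- an isotropic logconcave density `f` on `ℝ^s` (mean 0, identity
covariance) has maximum value `M_f ≥ (4eπ)^{-s/2}`. -/
theorem stmt7 (s : ℕ) (f : (Fin s → ℝ) → ℝ) (M : ℝ)
    (hf_nonneg : ∀ x, 0 ≤ f x)
    (hf_density : ∫ x, f x = 1)
    (hf_logconcave : ∀ x y : Fin s → ℝ, ∀ l : ℝ, 0 ≤ l → l ≤ 1 →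
      f x ^ l * f y ^ (1 - l) ≤ f (l • x + (1 - l) • y))
    (hmean : ∀ i, ∫ x, x i * f x = 0)
    (hcov : ∀ i j, ∫ x, x i * x j * f x = if i = j then 1 else 0)
    (hM : IsLUB (Set.range f) M) :
    (4 * Real.exp 1 * Real.pi) ^ (-(s : ℝ) / 2) ≤ M :=
  stmt7_general s f M hf_nonneg hf_density hcov hM
end

section
/- Let X be uniform on the simplex {x ∈ ℝ_+^N : Σ_e x_e ≤ L} (i.e. α = 1), let 0 ≤ p ≤ L, and let m = |{e : X_e ≤ p}|. Then Var(m) ≤ E[m], i.e. E[m²] - E[m]² ≤ N·(1 - (1-p/L)^N). -/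
/-!
Under the uniform distribution on the simplex, translating by `p` in the coordinates of `s`
shows `P(X_e > p for all e ∈ s) = max (1 - #s * p / L) 0 ^ N`. Since `1 - 2t ≤ (1 - t)²`, the
events `{X_e > p}` are pairwise negatively correlated, and hence so are their complements
`{X_e ≤ p}`. For pairwise negatively correlated events `A_e` the count `m` satisfies
`E[m²] = ∑ P(A_e) + ∑_{e ≠ f} P(A_e ∩ A_f) ≤ E[m] + E[m]²`.
-/

open MeasureTheory ProbabilityTheory Finset Set

section CountingEvents

variable {Ω ι : Type*} [Fintype ι] {E : ι → Ω → Prop} [∀ ω, DecidablePred (E · ω)]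

lemma card_filter_eq_sum_indicator (ω : Ω) :
    (#{e | E e ω} : ℝ) = ∑ e, {ω | E e ω}.indicator 1 ω := by
  simp only [natCast_card_filter, Set.indicator_apply, Set.mem_ofPred_eq, Pi.one_apply]

variable [MeasurableSpace Ω] {μ : Measure Ω}

lemma integral_card_filter [IsFiniteMeasure μ] (hE : ∀ e, MeasurableSet {ω | E e ω}) :
    ∫ ω, (#{e | E e ω} : ℝ) ∂μ = ∑ e, μ.real {ω | E e ω} := by
  simp_rw [card_filter_eq_sum_indicator]
  rw [integral_finsetSum _ fun e _ => (integrable_const 1).indicator (hE e)]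
  simp_rw [integral_indicator_one (hE _)]

lemma integral_card_filter_sq [IsFiniteMeasure μ] (hE : ∀ e, MeasurableSet {ω | E e ω}) :
    ∫ ω, (#{e | E e ω} : ℝ) ^ 2 ∂μ = ∑ e, ∑ f, μ.real {ω | E e ω ∧ E f ω} := by
  have hE₂ e f : MeasurableSet {ω | E e ω ∧ E f ω} := (hE e).inter (hE f)
  have hint e f : Integrable ({ω | E e ω ∧ E f ω}.indicator (1 : Ω → ℝ)) μ :=
    (integrable_const 1).indicator (hE₂ e f)
  have hmul ω e f : {ω | E e ω}.indicator 1 ω * {ω | E f ω}.indicator 1 ω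
      = {ω | E e ω ∧ E f ω}.indicator (1 : Ω → ℝ) ω := by
    rw [Set.ofPred_and, Set.inter_indicator_one, Pi.mul_apply]
  simp_rw [card_filter_eq_sum_indicator, sq, Finset.sum_mul_sum, hmul]
  rw [integral_finsetSum _ fun e _ => integrable_finsetSum _ fun f _ => hint e f]
  simp_rw [integral_finsetSum _ fun f _ => hint _ f, integral_indicator_one (hE₂ _ _)]

lemma integral_card_filter_sq_sub_sq_le [IsProbabilityMeasure μ]
    (hE : ∀ e, MeasurableSet {ω | E e ω})
    (hcorr : ∀ e f, e ≠ f →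
      μ.real {ω | E e ω ∧ E f ω} ≤ μ.real {ω | E e ω} * μ.real {ω | E f ω}) :
    ∫ ω, (#{e | E e ω} : ℝ) ^ 2 ∂μ - (∫ ω, (#{e | E e ω} : ℝ) ∂μ) ^ 2
      ≤ ∫ ω, (#{e | E e ω} : ℝ) ∂μ := by
  classical
  rw [integral_card_filter_sq hE, integral_card_filter hE, sq, Finset.sum_mul_sum,
    sub_le_iff_le_add, ← Finset.sum_add_distrib]
  gcongr with e _
  calc ∑ f, μ.real {ω | E e ω ∧ E f ω}
      ≤ ∑ f, ((if e = f then μ.real {ω | E e ω} else 0)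
          + μ.real {ω | E e ω} * μ.real {ω | E f ω}) := by
        gcongr with f _
        by_cases hef : e = f
        · subst hef
          simpa using mul_self_nonneg (μ.real {ω | E e ω})
        · simpa [hef] using hcorr e f hef
    _ = μ.real {ω | E e ω} + ∑ f, μ.real {ω | E e ω} * μ.real {ω | E f ω} := by
        rw [Finset.sum_add_distrib, Finset.sum_ite_eq, if_pos (Finset.mem_univ e)]

end CountingEvents

section Conditioning

variable {Ω : Type*} [MeasurableSpace Ω]

lemma probReal_compl_inter_compl_sub_mul {μ : Measure Ω} [IsProbabilityMeasure μ] {s t : Set Ω}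
    (hs : MeasurableSet s) (ht : MeasurableSet t) :
    μ.real (sᶜ ∩ tᶜ) - μ.real sᶜ * μ.real tᶜ = μ.real (s ∩ t) - μ.real s * μ.real t := by
  have hunion := measureReal_union_add_inter (μ := μ) (s := s) ht
  rw [← Set.compl_union, probReal_compl_eq_one_sub (hs.union ht), probReal_compl_eq_one_sub hs,
    probReal_compl_eq_one_sub ht]
  linarith

lemma integral_cond_eq_setIntegral_div (μ : Measure Ω) (s : Set Ω) (f : Ω → ℝ) :
    ∫ x, f x ∂μ[|s] = (∫ x in s, f x ∂μ) / (μ s).toReal := by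
  rw [ProbabilityTheory.cond, integral_smul_measure, ENNReal.toReal_inv, smul_eq_mul,
    inv_mul_eq_div]

end Conditioning

def solidSimplex (ι : Type*) [Fintype ι] (c : ℝ) : Set (ι → ℝ) :=
  {x | (∀ e, 0 ≤ x e) ∧ ∑ e, x e ≤ c}

section SolidSimplex

variable {ι : Type*} [Fintype ι]

lemma measurableSet_solidSimplex (c : ℝ) : MeasurableSet (solidSimplex ι c) := by
  simp only [solidSimplex, ofPred_and, ofPred_forall]
  exact (MeasurableSet.iInter fun e => measurableSet_le measurable_const
    (measurable_pi_apply e)).inter (measurableSet_le (by fun_prop) measurable_const)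

lemma solidSimplex_eq_empty {c : ℝ} (hc : c < 0) : solidSimplex ι c = ∅ :=
  eq_empty_of_forall_notMem fun _ ⟨hx, hsum⟩ =>
    (Finset.sum_nonneg fun e _ => hx e).not_gt (hsum.trans_lt hc)

lemma volume_solidSimplex_succ (n : ℕ) (c : ℝ) :
    volume (solidSimplex (Fin (n + 1)) c)
      = ∫⁻ t in Ici 0, volume (solidSimplex (Fin n) (c - t)) := by
  set e := MeasurableEquiv.piFinSuccAbove (fun _ : Fin (n + 1) => ℝ) 0
  set T : Set (ℝ × (Fin n → ℝ)) := {q | 0 ≤ q.1 ∧ q.2 ∈ solidSimplex (Fin n) (c - q.1)}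
  have hpre : e ⁻¹' T = solidSimplex (Fin (n + 1)) c := by
    ext x
    simp [e, T, solidSimplex, Fin.forall_fin_succ, Fin.sum_univ_succ, Fin.tail,
      le_sub_iff_add_le', and_assoc]
  have hT : MeasurableSet T := e.measurableSet_preimage.1 (hpre ▸ measurableSet_solidSimplex c)
  rw [← hpre, (volume_preserving_piFinSuccAbove (fun _ : Fin (n + 1) => ℝ) 0).measure_preimage
    hT.nullMeasurableSet, Measure.volume_eq_prod, Measure.prod_apply hT,
    ← lintegral_indicator measurableSet_Ici]
  congr with t
  by_cases ht : 0 ≤ t <;> simp [T, ht, indicator]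

lemma integral_sub_pow_div_factorial (n : ℕ) (c : ℝ) :
    ∫ t in (0)..c, (c - t) ^ n / n.factorial = c ^ (n + 1) / (n + 1).factorial := by
  rw [intervalIntegral.integral_div, intervalIntegral.integral_comp_sub_left (· ^ n), sub_self,
    sub_zero, integral_pow, Nat.factorial_succ]
  push_cast
  field_simp
  ring

lemma volume_solidSimplex (n : ℕ) {c : ℝ} (hc : 0 ≤ c) :
    volume (solidSimplex (Fin n) c) = ENNReal.ofReal (c ^ n / n.factorial) := by
  induction n generalizing c with
  | zero =>
    have : solidSimplex (Fin 0) c = univ := by ext x; simp [solidSimplex, hc]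
    simp [this, volume_pi]
  | succ n ih =>
    have hslice : ∀ t ∈ Ici (0 : ℝ), volume (solidSimplex (Fin n) (c - t))
        = (Iic c).indicator (fun t => ENNReal.ofReal ((c - t) ^ n / n.factorial)) t := by
      intro t _
      by_cases htc : t ≤ c
      · rw [indicator_of_mem (Set.mem_Iic.2 htc), ih (sub_nonneg.2 htc)]
      · rw [indicator_of_notMem (Set.notMem_Iic.2 (not_le.1 htc)),
          solidSimplex_eq_empty (by linarith [not_le.1 htc]), measure_empty]
    have hint : IntegrableOn (fun t => (c - t) ^ n / n.factorial) (Icc 0 c) :=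
      Continuous.integrableOn_Icc (by fun_prop)
    have hnonneg : 0 ≤ᵐ[volume.restrict (Icc 0 c)] fun t => (c - t) ^ n / n.factorial := by
      filter_upwards [ae_restrict_mem measurableSet_Icc] with t ht
      have := sub_nonneg.2 ht.2
      positivity
    rw [volume_solidSimplex_succ, setLIntegral_congr_fun measurableSet_Ici hslice,
      lintegral_indicator measurableSet_Iic, Measure.restrict_restrict measurableSet_Iic,
      Iic_inter_Ici, ← ofReal_integral_eq_lintegral_ofReal hint hnonneg,
      integral_Icc_eq_integral_Ioc, ← intervalIntegral.integral_of_le hc,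
      integral_sub_pow_div_factorial]

lemma volume_solidSimplex_inter_forall_le {p : ℝ} (hp : 0 ≤ p) (s : Finset ι) (c : ℝ) :
    volume (solidSimplex ι c ∩ {x | ∀ e ∈ s, p ≤ x e})
      = volume (solidSimplex ι (c - #s * p)) := by
  classical
  set a : ι → ℝ := fun e => if e ∈ s then p else 0
  have ha : ∀ e, 0 ≤ a e := fun e => by by_cases he : e ∈ s <;> simp [a, he, hp]
  have hsum : ∑ e, a e = #s * p := by simp [a, Finset.sum_ite_mem]
  have hpre : solidSimplex ι c ∩ {x | ∀ e ∈ s, p ≤ x e}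
      = (· + -a) ⁻¹' solidSimplex ι (c - #s * p) := by
    ext x
    simp only [Set.mem_inter_iff, Set.mem_preimage, solidSimplex, Set.mem_ofPred_eq,
      ← sub_eq_add_neg, Pi.sub_apply, Finset.sum_sub_distrib, hsum, sub_nonneg]
    constructor
    · rintro ⟨⟨hx, hxc⟩, hxs⟩
      refine ⟨fun e => ?_, by linarith⟩
      by_cases he : e ∈ s <;> simp [a, he, hxs e, hx e]
    · rintro ⟨hx, hxc⟩
      exact ⟨⟨fun e => (ha e).trans (hx e), by linarith⟩,
        fun e he => by simpa [a, he] using hx e⟩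
  rw [hpre, measure_preimage_add_right]

lemma ae_forall_apply_ne (p : ℝ) : ∀ᵐ x : ι → ℝ, ∀ e, x e ≠ p := by
  refine ae_all_iff.2 fun e => ?_
  simpa [ae_iff, volume_pi] using Measure.pi_hyperplane (fun _ : ι => (volume : Measure ℝ)) e p

lemma volume_solidSimplex_inter_forall_lt {p : ℝ} (hp : 0 ≤ p) (s : Finset ι) (c : ℝ) :
    volume (solidSimplex ι c ∩ {x | ∀ e ∈ s, p < x e})
      = volume (solidSimplex ι (c - #s * p)) := by
  rw [← volume_solidSimplex_inter_forall_le hp]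
  refine measure_congr (Filter.EventuallyEq.rfl.inter (Filter.eventuallyEq_set.2 ?_))
  filter_upwards [ae_forall_apply_ne p] with x hx
  simp [lt_iff_le_and_ne, fun e => (hx e).symm]

end SolidSimplex

section UniformOnSolidSimplex

variable {n : ℕ} {c p : ℝ}

lemma isProbabilityMeasure_cond_solidSimplex (hc : 0 < c) :
    IsProbabilityMeasure (volume[|solidSimplex (Fin n) c]) := by
  refine cond_isProbabilityMeasure_of_finite ?_ ?_ <;> rw [volume_solidSimplex n hc.le]
  · simp only [ne_eq, ENNReal.ofReal_eq_zero, not_le]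
    positivity
  · exact ENNReal.ofReal_ne_top

lemma measureReal_cond_solidSimplex_forall_lt (hc : 0 < c) (hp : 0 ≤ p) (s : Finset (Fin n)) :
    (volume[|solidSimplex (Fin n) c]).real {x | ∀ e ∈ s, p < x e}
      = max (1 - #s * p / c) 0 ^ n := by
  rw [measureReal_def, cond_apply (measurableSet_solidSimplex c),
    volume_solidSimplex_inter_forall_lt hp, ENNReal.toReal_mul, ENNReal.toReal_inv,
    volume_solidSimplex n hc.le, ENNReal.toReal_ofReal (by positivity)]
  rcases le_or_gt (#s * p) c with hsp | hsp
  · have := sub_nonneg.2 hsp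
    rw [volume_solidSimplex n this, ENNReal.toReal_ofReal (by positivity),
      max_eq_left (by rwa [sub_nonneg, div_le_one hc]), one_sub_div hc.ne', div_pow]
    field_simp
  · have hs : #s ≠ 0 := by
      rintro hs
      rw [hs, Nat.cast_zero, zero_mul] at hsp
      exact hsp.not_ge hc.le
    have hn : n ≠ 0 := by
      have := s.card_le_univ
      rw [Fintype.card_fin] at this
      omega
    rw [solidSimplex_eq_empty (sub_neg.2 hsp), measure_empty, ENNReal.toReal_zero, mul_zero,
      max_eq_right (by rw [sub_nonpos, one_le_div hc]; exact hsp.le), zero_pow hn]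

lemma measureReal_cond_solidSimplex_lt (hc : 0 < c) (hp : 0 ≤ p) (hpc : p ≤ c) (e : Fin n) :
    (volume[|solidSimplex (Fin n) c]).real {x | p < x e} = (1 - p / c) ^ n := by
  simpa [max_eq_left (sub_nonneg.2 ((div_le_one hc).2 hpc))]
    using measureReal_cond_solidSimplex_forall_lt hc hp {e}

lemma measureReal_cond_solidSimplex_le (hc : 0 < c) (hp : 0 ≤ p) (hpc : p ≤ c) (e : Fin n) :
    (volume[|solidSimplex (Fin n) c]).real {x | x e ≤ p} = 1 - (1 - p / c) ^ n := by
  have := isProbabilityMeasure_cond_solidSimplex (n := n) hc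
  rw [← measureReal_cond_solidSimplex_lt hc hp hpc e, ← probReal_compl_eq_one_sub
    (measurableSet_lt measurable_const (measurable_pi_apply e))]
  congr with x
  simp

lemma measureReal_cond_solidSimplex_lt_and_lt_le {e f : Fin n} (hc : 0 < c) (hp : 0 ≤ p)
    (hpc : p ≤ c) (hef : e ≠ f) :
    (volume[|solidSimplex (Fin n) c]).real {x | p < x e ∧ p < x f}
      ≤ (volume[|solidSimplex (Fin n) c]).real {x | p < x e}
        * (volume[|solidSimplex (Fin n) c]).real {x | p < x f} := by
  have hpair : {x : Fin n → ℝ | p < x e ∧ p < x f}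
      = {x | ∀ e' ∈ ({e, f} : Finset (Fin n)), p < x e'} := by
    ext x; simp
  rw [hpair, measureReal_cond_solidSimplex_forall_lt hc hp,
    measureReal_cond_solidSimplex_lt hc hp hpc, measureReal_cond_solidSimplex_lt hc hp hpc,
    ← mul_pow, Finset.card_pair hef]
  refine pow_le_pow_left₀ (le_max_right _ _) (max_le ?_ (mul_self_nonneg _)) n
  push_cast
  rw [mul_div_assoc]
  nlinarith [sq_nonneg (p / c)]

lemma measureReal_cond_solidSimplex_le_and_le_le {e f : Fin n} (hc : 0 < c) (hp : 0 ≤ p)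
    (hpc : p ≤ c) (hef : e ≠ f) :
    (volume[|solidSimplex (Fin n) c]).real {x | x e ≤ p ∧ x f ≤ p}
      ≤ (volume[|solidSimplex (Fin n) c]).real {x | x e ≤ p}
        * (volume[|solidSimplex (Fin n) c]).real {x | x f ≤ p} := by
  have := isProbabilityMeasure_cond_solidSimplex (n := n) hc
  have hgt e : MeasurableSet {x : Fin n → ℝ | p < x e} :=
    measurableSet_lt measurable_const (measurable_pi_apply e)
  have hle e : {x : Fin n → ℝ | x e ≤ p} = {x | p < x e}ᶜ := by ext; simp
  rw [Set.ofPred_and, hle, hle, ← sub_nonpos, probReal_compl_inter_compl_sub_mul (hgt e) (hgt f),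
    sub_nonpos, ← Set.ofPred_and]
  exact measureReal_cond_solidSimplex_lt_and_lt_le hc hp hpc hef

end UniformOnSolidSimplex

theorem stmt11_general (N : ℕ) (L p : ℝ) (hL : 0 < L)
    (hp0 : 0 ≤ p) (hpL : p ≤ L) :
    (∫ x in {x : Fin N → ℝ | (∀ e, 0 ≤ x e) ∧ ∑ e, x e ≤ L},
        ((Finset.univ.filter (fun e : Fin N => x e ≤ p)).card : ℝ) ^ 2) /
      (volume {x : Fin N → ℝ | (∀ e, 0 ≤ x e) ∧ ∑ e, x e ≤ L}).toReal
    - ((∫ x in {x : Fin N → ℝ | (∀ e, 0 ≤ x e) ∧ ∑ e, x e ≤ L},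
        ((Finset.univ.filter (fun e : Fin N => x e ≤ p)).card : ℝ)) /
      (volume {x : Fin N → ℝ | (∀ e, 0 ≤ x e) ∧ ∑ e, x e ≤ L}).toReal) ^ 2
    ≤ N * (1 - (1 - p / L) ^ N) := by
  rw [← integral_cond_eq_setIntegral_div, ← integral_cond_eq_setIntegral_div,
    show {x : Fin N → ℝ | (∀ e, 0 ≤ x e) ∧ ∑ e, x e ≤ L} = solidSimplex (Fin N) L from rfl]
  have := isProbabilityMeasure_cond_solidSimplex (n := N) hL
  have hmeas e : MeasurableSet {x : Fin N → ℝ | x e ≤ p} :=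
    measurableSet_le (measurable_pi_apply e) measurable_const
  calc _ ≤ ∫ x, (#{e | x e ≤ p} : ℝ) ∂volume[|solidSimplex (Fin N) L] :=
        integral_card_filter_sq_sub_sq_le hmeas fun e f hef =>
          measureReal_cond_solidSimplex_le_and_le_le hL hp0 hpL hef
    _ = N * (1 - (1 - p / L) ^ N) := by
        simp only [integral_card_filter hmeas, measureReal_cond_solidSimplex_le hL hp0 hpL,
          Finset.sum_const, Finset.card_univ, Fintype.card_fin, nsmul_eq_mul]

/-- for `X` uniform on `{x ∈ ℝ_+^N : ∑ x_e ≤ L}` and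
`m = #{e : X_e ≤ p}` with `0 ≤ p ≤ L`, `Var(m) ≤ E[m] = N(1-(1-p/L)^N)`. -/
theorem stmt11 (N : ℕ) (hN : 2 ≤ N) (L p : ℝ) (hL : 0 < L)
    (hp0 : 0 ≤ p) (hpL : p ≤ L) :
    (∫ x in {x : Fin N → ℝ | (∀ e, 0 ≤ x e) ∧ ∑ e, x e ≤ L},
        ((Finset.univ.filter (fun e : Fin N => x e ≤ p)).card : ℝ) ^ 2) /
      (volume {x : Fin N → ℝ | (∀ e, 0 ≤ x e) ∧ ∑ e, x e ≤ L}).toReal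
    - ((∫ x in {x : Fin N → ℝ | (∀ e, 0 ≤ x e) ∧ ∑ e, x e ≤ L},
        ((Finset.univ.filter (fun e : Fin N => x e ≤ p)).card : ℝ)) /
      (volume {x : Fin N → ℝ | (∀ e, 0 ≤ x e) ∧ ∑ e, x e ≤ L}).toReal) ^ 2
    ≤ N * (1 - (1 - p / L) ^ N) :=
  stmt11_general N L p hL hp0 hpL
end
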